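/- arXiv:1309.0147 — 2 statements merged into one kernel-verified Lean document; each statement's English description precedes it below -/
import Mathlib

section
/- Let F(x_1,...,x_n) be a form over a field k of characteristic zero. Then the order of F is at most one more than the order of x_1·F(x_1,...,x_n). -/
open MvPolynomial

/-- The order of a form `F` over a field `k`: the minimal `m` such that after an invertible
linear change of variables `T ∈ GLₙ(k)`, the polynomial `F(T x)` involves at most `m` of the
variables. -/
noncomputable def formOrder (k : Type*) [Field k] {n : ℕ} (F : MvPolynomial (Fin n) k) : ℕ :=
  sInf {m : ℕ | ∃ T : Matrix.GeneralLinearGroup (Fin n) k,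
    ((MvPolynomial.aeval (fun i : Fin n =>
      ∑ j : Fin n, MvPolynomial.C ((T : Matrix (Fin n) (Fin n) k) i j) * MvPolynomial.X j)) F).vars.card
      ≤ m}

lemma mem_vars_iff_degreeOf_pos {k : Type*} [CommSemiring k] {σ : Type*}
    {p : MvPolynomial σ k} {i : σ} : i ∈ p.vars ↔ 0 < p.degreeOf i := by
  classical
  simp [MvPolynomial.vars_def, MvPolynomial.degreeOf, Multiset.count_pos]

lemma degreeOf_zero_le_degreeOf_zero_mul {k : Type*} [Field k] {n : ℕ}
    (p q : MvPolynomial (Fin (n + 1)) k) (hp : p ≠ 0) :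
    q.degreeOf 0 ≤ (p * q).degreeOf 0 := by
  rcases eq_or_ne q 0 with rfl | hq
  · simp
  rw [← MvPolynomial.natDegree_finSuccEquiv, ← MvPolynomial.natDegree_finSuccEquiv, map_mul]
  rw [Polynomial.natDegree_mul (by simpa using hp) (by simpa using hq)]
  exact Nat.le_add_left _ _

lemma degreeOf_le_degreeOf_mul {k : Type*} [Field k] {n : ℕ}
    (p q : MvPolynomial (Fin (n + 1)) k) (hp : p ≠ 0) (i : Fin (n + 1)) :
    q.degreeOf i ≤ (p * q).degreeOf i := by
  classical
  have hsw : Function.Injective (Equiv.swap (0 : Fin (n + 1)) i) := (Equiv.swap 0 i).injective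
  have h0 : Equiv.swap (0 : Fin (n + 1)) i i = 0 := Equiv.swap_apply_right 0 i
  have hq := MvPolynomial.degreeOf_rename_of_injective (p := q) hsw i
  have hpq := MvPolynomial.degreeOf_rename_of_injective (p := p * q) hsw i
  rw [h0] at hq hpq
  rw [← hq, ← hpq, map_mul]
  exact degreeOf_zero_le_degreeOf_zero_mul _ _ (by
    intro h
    exact hp ((MvPolynomial.rename_injective _ hsw).eq_iff.mp (by simp [h])))

lemma vars_subset_vars_mul {k : Type*} [Field k] {n : ℕ}
    (p q : MvPolynomial (Fin (n + 1)) k) (hp : p ≠ 0) :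
    q.vars ⊆ (p * q).vars := by
  intro i hi
  rw [mem_vars_iff_degreeOf_pos] at hi ⊢
  exact lt_of_lt_of_le hi (degreeOf_le_degreeOf_mul p q hp i)

/-- For a form `F` over a field of characteristic zero, the order of `F` is at most one more
than the order of `x₁ · F`. -/
theorem formOrder_le_formOrder_mul_X_add_one (k : Type*) [Field k] [CharZero k]
    (n d : ℕ) (F : MvPolynomial (Fin (n + 1)) k) (hF : F.IsHomogeneous d) :
    formOrder k F ≤ formOrder k (MvPolynomial.X 0 * F) + 1 := by
  classical
  set S := {m : ℕ | ∃ T : Matrix.GeneralLinearGroup (Fin (n + 1)) k,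
    ((MvPolynomial.aeval (fun i : Fin (n + 1) =>
      ∑ j : Fin (n + 1), MvPolynomial.C ((T : Matrix (Fin (n + 1)) (Fin (n + 1)) k) i j)
        * MvPolynomial.X j)) (MvPolynomial.X 0 * F)).vars.card ≤ m} with hS
  have hne : S.Nonempty := by
    refine ⟨_, 1, le_refl _⟩
  have hmem : formOrder k (MvPolynomial.X 0 * F) ∈ S := by
    have := Nat.sInf_mem hne
    exact this
  obtain ⟨T, hT⟩ := hmem
  set f : Fin (n + 1) → MvPolynomial (Fin (n + 1)) k := fun i =>
    ∑ j : Fin (n + 1), MvPolynomial.C ((T : Matrix (Fin (n + 1)) (Fin (n + 1)) k) i j)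
      * MvPolynomial.X j with hf
  -- the image of X 0 is nonzero
  have hL : MvPolynomial.aeval (R := k) f (MvPolynomial.X (0 : Fin (n + 1))) ≠ 0 := by
    have hrow : ∃ j, (T : Matrix (Fin (n + 1)) (Fin (n + 1)) k) 0 j ≠ 0 := by
      by_contra h
      push_neg at h
      have hdet : (T : Matrix (Fin (n + 1)) (Fin (n + 1)) k).det = 0 :=
        Matrix.det_eq_zero_of_row_eq_zero 0 h
      have : IsUnit (T : Matrix (Fin (n + 1)) (Fin (n + 1)) k).det :=
        (Matrix.isUnit_iff_isUnit_det _).mp (Units.isUnit T)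
      rw [hdet] at this
      exact this.ne_zero rfl
    obtain ⟨j, hj⟩ := hrow
    intro h
    rw [MvPolynomial.aeval_X, hf] at h
    have := congrArg (MvPolynomial.coeff (Finsupp.single j 1)) h
    simp only [MvPolynomial.coeff_sum, MvPolynomial.coeff_C_mul, MvPolynomial.coeff_zero,
      MvPolynomial.coeff_X', Finsupp.single_left_inj (one_ne_zero)] at this
    rw [Finset.sum_eq_single j (by intro b _ hb; simp [if_neg (by simpa using hb)])
      (by intro hb; exact absurd (Finset.mem_univ j) hb)] at this
    simp at this
    exact hj this
  have hsub : (MvPolynomial.aeval (R := k) f F).vars ⊆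
      (MvPolynomial.aeval (R := k) f (MvPolynomial.X 0 * F)).vars := by
    rw [map_mul]
    exact vars_subset_vars_mul _ _ hL
  have hcard : (MvPolynomial.aeval (R := k) f F).vars.card ≤
      formOrder k (MvPolynomial.X 0 * F) :=
    le_trans (Finset.card_le_card hsub) hT
  have : formOrder k F ≤ formOrder k (MvPolynomial.X 0 * F) :=
    Nat.sInf_le ⟨T, hcard⟩
  omega
end

section
/- Let Q be a quadratic form in n variables over a field k with rank(Q) at least 5, and suppose a cubic form C satisfies C = L·R + L̃·Q identically, where L, L̃ are linear forms and R is a quadratic form over the algebraic closure, with the hyperplane L = 0 defined over a cubic extension of k but over no smaller field, and with conjugates L = L_1, L_2, L_3 satisfying C = L_i R_i + L̃_i Q for each i. If L and L_2 are not proportional, then R vanishes on the variety L_2 = Q = 0, so R = L_2·L_2' + c_2·Q for some linear form L_2' and constant c_2 over the algebraic closure. -/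
/-!
Fix `u` with `L₂(u) = 1` and let `π` be the substitution `x ↦ x - L₂(x) u`. It kills `L₂` and is
the identity modulo `L₂`, so its kernel is the ideal `(L₂)`. Applying `π` to the identity gives
`π L · π R = (π L̃₂ - π L̃) · π Q`. Since `Q ≡ π Q` modulo `L₂`, a factorisation of `π Q` into
linear forms would write `Q = L₂ B + f g`, a form of rank at most `4`; hence `π Q` is
irreducible, so prime. It cannot divide the linear form `π L`, which is nonzero because `L` is
not a multiple of `L₂`. So `π Q ∣ π R`, and by degree `π R = c · π Q`; then `R - c Q` lies in
the kernel `(L₂)`, i.e. it is `L₂` times a linear form.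
-/

namespace Matrix

variable {n K : Type*} [Fintype n] [Field K]

theorem rank_le_four_of_dotProduct_mulVec_self_eq {M : Matrix n n K} (hM : M.IsSymm)
    (h2 : (2 : K) ≠ 0) (a b c d : n → K)
    (h : ∀ x, x ⬝ᵥ M *ᵥ x = (a ⬝ᵥ x) * (b ⬝ᵥ x) + (c ⬝ᵥ x) * (d ⬝ᵥ x)) :
    M.rank ≤ 4 := by
  have hsymm (x y : n → K) : y ⬝ᵥ M *ᵥ x = x ⬝ᵥ M *ᵥ y := by
    rw [dotProduct_mulVec, ← mulVec_transpose, hM.eq, dotProduct_comm]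
  have polar (y : n → K) : (2 : K) • (M *ᵥ y) =
      (b ⬝ᵥ y) • a + (a ⬝ᵥ y) • b + (d ⬝ᵥ y) • c + (c ⬝ᵥ y) • d := by
    refine dotProduct_eq _ _ fun x => ?_
    have hxy := h (x + y)
    simp only [mulVec_add, dotProduct_add, add_dotProduct, h x, h y, hsymm x y] at hxy
    simp only [smul_dotProduct, add_dotProduct, smul_eq_mul, dotProduct_comm (M *ᵥ y)]
    linear_combination hxy
  set V := Submodule.span K (Set.range ![a, b, c, d])
  have hrange : LinearMap.range M.mulVecLin ≤ V := by
    rintro _ ⟨y, rfl⟩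
    rw [mulVecLin_apply, ← Submodule.smul_mem_iff _ h2, polar]
    have ha : a ∈ V := Submodule.subset_span ⟨0, rfl⟩
    have hb : b ∈ V := Submodule.subset_span ⟨1, rfl⟩
    have hc : c ∈ V := Submodule.subset_span ⟨2, rfl⟩
    have hd : d ∈ V := Submodule.subset_span ⟨3, rfl⟩
    exact add_mem (add_mem (add_mem (V.smul_mem _ ha) (V.smul_mem _ hb)) (V.smul_mem _ hc))
      (V.smul_mem _ hd)
  calc M.rank ≤ Module.finrank K V := Submodule.finrank_mono hrange
    _ ≤ 4 := (finrank_range_le_card _).trans (by simp)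

end Matrix

namespace MvPolynomial

section CommSemiring

variable {σ R : Type*} [CommSemiring R]

attribute [local instance] MvPolynomial.gradedAlgebra in
theorem homogeneousComponent_add_mul_of_isHomogeneous_left {l : MvPolynomial σ R} {i : ℕ}
    (hl : l.IsHomogeneous i) (q : MvPolynomial σ R) (j : ℕ) :
    homogeneousComponent (i + j) (l * q) = l * homogeneousComponent j q := by
  have hdec (φ : MvPolynomial σ R) (k : ℕ) :
      (DirectSum.decompose (homogeneousSubmodule σ R) φ k : MvPolynomial σ R) =
        homogeneousComponent k φ :=
    decomposition.decompose'_apply φ k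
  have := DirectSum.coe_decompose_mul_of_left_mem_of_le (homogeneousSubmodule σ R) (b := q)
    (n := i + j) hl (Nat.le_add_right i j)
  rwa [hdec, hdec, Nat.add_sub_cancel_left] at this

theorem homogeneousComponent_add_mul_of_totalDegree_le {f g : MvPolynomial σ R} {a b : ℕ}
    (hf : f.totalDegree ≤ a) (hg : g.totalDegree ≤ b) :
    homogeneousComponent (a + b) (f * g) = homogeneousComponent a f * homogeneousComponent b g := by
  have term (k : ℕ) (hk : k ≤ a) : homogeneousComponent (a + b) (homogeneousComponent k f * g) =
      homogeneousComponent k f * homogeneousComponent (a + b - k) g := by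
    rw [← homogeneousComponent_add_mul_of_isHomogeneous_left
      (homogeneousComponent_isHomogeneous k f), Nat.add_sub_cancel' (by omega)]
  conv_lhs => rw [← sum_homogeneousComponent f, Finset.sum_mul, map_sum]
  rw [Finset.sum_eq_single a]
  · rw [term a le_rfl, Nat.add_sub_cancel_left]
  · intro k hk hka
    have hka : k < a := by rw [Finset.mem_range] at hk; omega
    rw [term k hka.le, homogeneousComponent_eq_zero (a + b - k) g (by omega), mul_zero]
  · intro ha
    rw [homogeneousComponent_eq_zero a f (by simp at ha; omega), zero_mul, map_zero]

theorem IsHomogeneous.exists_eq_mul_of_dvd {l p : MvPolynomial σ R} {i j : ℕ}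
    (hl : l.IsHomogeneous i) (hp : p.IsHomogeneous (i + j)) (h : l ∣ p) :
    ∃ q : MvPolynomial σ R, q.IsHomogeneous j ∧ p = l * q := by
  obtain ⟨q, rfl⟩ := h
  refine ⟨homogeneousComponent j q, homogeneousComponent_isHomogeneous j q, ?_⟩
  rw [← homogeneousComponent_add_mul_of_isHomogeneous_left hl, homogeneousComponent_eq_self hp]

theorem IsHomogeneous.exists_eq_C_mul_of_dvd {P p : MvPolynomial σ R} {d : ℕ}
    (hP : P.IsHomogeneous d) (hp : p.IsHomogeneous d) (h : P ∣ p) :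
    ∃ c : R, p = C c * P := by
  obtain ⟨q, hq, rfl⟩ := hP.exists_eq_mul_of_dvd (j := 0) hp h
  exact ⟨coeff 0 q, by rw [← totalDegree_eq_zero_iff_eq_C.mp
    ((totalDegree_zero_iff_isHomogeneous σ).mpr hq), mul_comm]⟩

theorem IsHomogeneous.eq_sum_C_coeff_mul_X [Fintype σ] {p : MvPolynomial σ R}
    (hp : p.IsHomogeneous 1) : p = ∑ i, C (coeff (Finsupp.single i 1) p) * X i := by
  have hmem : p ∈ Submodule.span R (Set.range (X : σ → MvPolynomial σ R)) := by
    rw [← homogeneousSubmodule_one_eq_span_X]; exact hp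
  clear hp
  induction hmem using Submodule.span_induction with
  | mem x hx =>
    obtain ⟨j, rfl⟩ := hx
    classical
    simp [coeff_X, Finsupp.single_left_inj one_ne_zero]
  | zero => simp
  | add x y _ _ hx hy =>
    nth_rewrite 1 [hx, hy]
    simp only [coeff_add, C_add, add_mul, Finset.sum_add_distrib]
  | smul r x _ hx =>
    rw [smul_eq_C_mul]
    nth_rewrite 1 [hx]
    simp only [coeff_C_mul, map_mul, Finset.mul_sum, mul_assoc]

theorem IsHomogeneous.eval_eq_dotProduct [Fintype σ] {p : MvPolynomial σ R}
    (hp : p.IsHomogeneous 1) (x : σ → R) :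
    eval x p = (fun i => coeff (Finsupp.single i 1) p) ⬝ᵥ x := by
  conv_lhs => rw [hp.eq_sum_C_coeff_mul_X]
  simp [dotProduct]

open Matrix in
theorem eval_sum_C_mul_X_mul_X [Fintype σ] (M : Matrix σ σ R) (x : σ → R) :
    eval x (∑ i, ∑ j, C (M i j) * X i * X j) = x ⬝ᵥ M *ᵥ x := by
  simp only [map_sum, map_mul, eval_C, eval_X, dotProduct, mulVec, Finset.mul_sum]
  exact Finset.sum_congr rfl fun i _ => Finset.sum_congr rfl fun j _ => by ring

theorem isHomogeneous_sum_C_mul_X_mul_X [Fintype σ] (M : Matrix σ σ R) :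
    (∑ i, ∑ j, C (M i j) * X i * X j).IsHomogeneous 2 :=
  IsHomogeneous.sum _ _ _ fun i _ => IsHomogeneous.sum _ _ _ fun j _ =>
    (isHomogeneous_C_mul_X (M i j) i).mul (isHomogeneous_X R j)

end CommSemiring

section CommRing

variable {σ R : Type*} [CommRing R]

/-- When `l(u) = 1`, this substitution retracts onto the hyperplane `l = 0`. -/
noncomputable def projAlong (l : MvPolynomial σ R) (u : σ → R) :
    MvPolynomial σ R →ₐ[R] MvPolynomial σ R :=
  aeval fun j => X j - C (u j) * l

theorem dvd_sub_projAlong (l : MvPolynomial σ R) (u : σ → R) (p : MvPolynomial σ R) :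
    l ∣ p - projAlong l u p := by
  let mk := Ideal.Quotient.mkₐ R (Ideal.span {l})
  have hmk : mk.comp (projAlong l u) = mk := algHom_ext fun j => by simp [mk, projAlong]
  rw [← Ideal.mem_span_singleton, ← Ideal.Quotient.mk_eq_mk_iff_sub_mem]
  exact (congrArg (· p) hmk).symm

theorem dvd_of_projAlong_eq_zero {l p : MvPolynomial σ R} {u : σ → R}
    (h : projAlong l u p = 0) : l ∣ p := by
  simpa [h] using dvd_sub_projAlong l u p

theorem IsHomogeneous.projAlong {l p : MvPolynomial σ R} {d : ℕ} (hp : p.IsHomogeneous d)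
    (hl : l.IsHomogeneous 1) (u : σ → R) : (projAlong l u p).IsHomogeneous d := by
  have := hp.aeval _ fun j => (isHomogeneous_X R j).sub (hl.C_mul (u j))
  rwa [one_mul] at this

theorem projAlong_of_isHomogeneous_one [Fintype σ] {l p : MvPolynomial σ R} (u : σ → R)
    (hp : p.IsHomogeneous 1) : projAlong l u p = p - C (eval u p) * l := by
  obtain ⟨a, rfl⟩ : ∃ a : σ → R, p = ∑ i, C (a i) * X i := ⟨_, hp.eq_sum_C_coeff_mul_X⟩
  simp [projAlong, mul_sub, Finset.sum_sub_distrib, Finset.sum_mul, mul_assoc]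

theorem projAlong_self [Fintype σ] {l : MvPolynomial σ R} {u : σ → R} (hl : l.IsHomogeneous 1)
    (hu : eval u l = 1) : projAlong l u l = 0 := by
  rw [projAlong_of_isHomogeneous_one u hl, hu, C_1, one_mul, sub_self]

end CommRing

section Field

variable {σ K : Type*} [Field K]

theorem IsHomogeneous.exists_eval_eq_one [Fintype σ] {l : MvPolynomial σ K}
    (hl : l.IsHomogeneous 1) (hl0 : l ≠ 0) : ∃ u : σ → K, eval u l = 1 := by
  classical
  obtain ⟨i, hi⟩ : ∃ i, coeff (Finsupp.single i 1) l ≠ 0 := by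
    by_contra! h
    exact hl0 (by rw [hl.eq_sum_C_coeff_mul_X]; simp [h])
  exact ⟨Pi.single i (coeff (Finsupp.single i 1) l)⁻¹, by simp [hl.eval_eq_dotProduct, hi]⟩

theorem isUnit_of_totalDegree_eq_zero {p : MvPolynomial σ K} (hp0 : p ≠ 0)
    (hp : p.totalDegree = 0) : IsUnit p := by
  refine isUnit_iff_totalDegree_of_isReduced.mpr ⟨isUnit_iff_ne_zero.mpr fun h => hp0 ?_, hp⟩
  rw [totalDegree_eq_zero_iff_eq_C.mp hp, h, C_0]

theorem irreducible_of_isHomogeneous_two {P : MvPolynomial σ K}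
    (hP : P.IsHomogeneous 2) (hP0 : P ≠ 0)
    (hPf : ∀ f g : MvPolynomial σ K, f.IsHomogeneous 1 → g.IsHomogeneous 1 → P ≠ f * g) :
    Irreducible P := by
  have hdeg : P.totalDegree = 2 := hP.totalDegree hP0
  refine ⟨fun hu => ?_, fun f g hfg => ?_⟩
  · have := totalDegree_le_of_dvd_of_isDomain (hu.dvd (a := 1)) one_ne_zero
    simp [hdeg] at this
  have hf0 : f ≠ 0 := by rintro rfl; simp_all
  have hg0 : g ≠ 0 := by rintro rfl; simp_all
  have hsum : f.totalDegree + g.totalDegree = 2 := by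
    rw [← totalDegree_mul_of_isDomain hf0 hg0, ← hfg, hdeg]
  by_contra! hunits
  have hf1 : f.totalDegree = 1 := by
    have := mt (isUnit_of_totalDegree_eq_zero hf0) hunits.1
    have := mt (isUnit_of_totalDegree_eq_zero hg0) hunits.2
    omega
  have hg1 : g.totalDegree = 1 := by omega
  refine hPf _ _ (homogeneousComponent_isHomogeneous 1 f)
    (homogeneousComponent_isHomogeneous 1 g) ?_
  rw [← homogeneousComponent_add_mul_of_totalDegree_le hf1.le hg1.le, ← hfg,
    homogeneousComponent_eq_self hP]

theorem rank_le_four_of_sum_C_mul_X_mul_X_eq [Fintype σ] {M : Matrix σ σ K} (hM : M.IsSymm)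
    (h2 : (2 : K) ≠ 0) {p₁ p₂ p₃ p₄ : MvPolynomial σ K} (h₁ : p₁.IsHomogeneous 1)
    (h₂ : p₂.IsHomogeneous 1) (h₃ : p₃.IsHomogeneous 1) (h₄ : p₄.IsHomogeneous 1)
    (h : ∑ i, ∑ j, C (M i j) * X i * X j = p₁ * p₂ + p₃ * p₄) :
    M.rank ≤ 4 := by
  have key (x : σ → K) :
      x ⬝ᵥ M.mulVec x = eval x p₁ * eval x p₂ + eval x p₃ * eval x p₄ := by
    rw [← eval_sum_C_mul_X_mul_X, h, map_add, map_mul, map_mul]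
  simp only [h₁.eval_eq_dotProduct, h₂.eval_eq_dotProduct, h₃.eval_eq_dotProduct,
    h₄.eval_eq_dotProduct] at key
  exact Matrix.rank_le_four_of_dotProduct_mulVec_self_eq hM h2 _ _ _ _ key

theorem irreducible_projAlong_of_five_le_rank [Fintype σ] {M : Matrix σ σ K} (hM : M.IsSymm)
    (h2 : (2 : K) ≠ 0) (hrank : 5 ≤ M.rank) {l : MvPolynomial σ K} (hl : l.IsHomogeneous 1)
    (u : σ → K) : Irreducible (projAlong l u (∑ i, ∑ j, C (M i j) * X i * X j)) := by
  set Q := ∑ i, ∑ j, C (M i j) * X i * X j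
  have hQ : Q.IsHomogeneous 2 := isHomogeneous_sum_C_mul_X_mul_X M
  obtain ⟨B, hB, hQB⟩ := hl.exists_eq_mul_of_dvd (j := 1) (hQ.sub (hQ.projAlong hl u))
    (dvd_sub_projAlong l u Q)
  have rank_le {f g : MvPolynomial σ K} (hf : f.IsHomogeneous 1) (hg : g.IsHomogeneous 1)
      (h : projAlong l u Q = f * g) : M.rank ≤ 4 :=
    rank_le_four_of_sum_C_mul_X_mul_X_eq hM h2 hl hB hf hg (by rw [← h, ← hQB]; ring)
  refine irreducible_of_isHomogeneous_two (hQ.projAlong hl u) (fun h0 => ?_)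
    fun f g hf hg h => ?_
  · have := rank_le (isHomogeneous_zero _ _ 1) (isHomogeneous_zero _ _ 1) (by rw [h0, mul_zero])
    omega
  · have := rank_le hf hg h
    omega

end Field

end MvPolynomial

open MvPolynomial

theorem quadratic_in_ideal_of_vanishing_general (K : Type*) [Field K] [CharZero K]
    (n : ℕ) (MQ : Matrix (Fin n) (Fin n) K) (hMQ : MQ.IsSymm) (hrank : 5 ≤ MQ.rank)
    (Q : MvPolynomial (Fin n) K)
    (hQdef : Q = ∑ i, ∑ j, MvPolynomial.C (MQ i j) * MvPolynomial.X i * MvPolynomial.X j)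
    (L L2 Lt Lt2 R R2 : MvPolynomial (Fin n) K)
    (hL : L.IsHomogeneous 1) (hL2 : L2.IsHomogeneous 1)
    (hR : R.IsHomogeneous 2)
    (heq : L * R + Lt * Q = L2 * R2 + Lt2 * Q)
    (hprop : ¬ ∃ c : K, L = c • L2 ∨ L2 = c • L) :
    (∀ y : Fin n → K, MvPolynomial.eval y L2 = 0 → MvPolynomial.eval y Q = 0 →
        MvPolynomial.eval y R = 0) ∧
    ∃ (L2' : MvPolynomial (Fin n) K) (c2 : K), L2'.IsHomogeneous 1 ∧
      R = L2 * L2' + MvPolynomial.C c2 * Q := by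
  have hL2ne : L2 ≠ 0 := fun h => hprop ⟨0, Or.inr (by simp [h])⟩
  obtain ⟨u, hu⟩ := hL2.exists_eval_eq_one hL2ne
  set π := projAlong L2 u
  have hQ : Q.IsHomogeneous 2 := hQdef ▸ isHomogeneous_sum_C_mul_X_mul_X MQ
  have hπQ : Prime (π Q) := by
    rw [hQdef]; exact (irreducible_projAlong_of_five_le_rank hMQ two_ne_zero hrank hL2 u).prime
  have hπL : π L ≠ 0 := fun h => by
    obtain ⟨c, hc⟩ := hL2.exists_eq_C_mul_of_dvd hL (dvd_of_projAlong_eq_zero h)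
    exact hprop ⟨c, Or.inl (by rw [hc, smul_eq_C_mul])⟩
  have hπL2 : π L2 = 0 := projAlong_self hL2 hu
  have hπQ_dvd : π Q ∣ π L * π R := ⟨π Lt2 - π Lt, by
    have := congrArg π heq
    simp only [map_add, map_mul, hπL2, zero_mul, zero_add] at this
    linear_combination this⟩
  have hπQ_not_dvd : ¬ π Q ∣ π L := fun h => by
    have := totalDegree_le_of_dvd_of_isDomain h hπL
    rw [(hQ.projAlong hL2 u).totalDegree hπQ.ne_zero] at this
    have : (π L).totalDegree ≤ 1 := (hL.projAlong hL2 u).totalDegree_le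
    omega
  obtain ⟨c, hc⟩ := (hQ.projAlong hL2 u).exists_eq_C_mul_of_dvd (hR.projAlong hL2 u)
    ((hπQ.dvd_or_dvd hπQ_dvd).resolve_left hπQ_not_dvd)
  obtain ⟨L2', hL2', hR'⟩ := hL2.exists_eq_mul_of_dvd (j := 1) (hR.sub (hQ.C_mul c))
    (dvd_of_projAlong_eq_zero (u := u) (by rw [map_sub, map_mul, hc]; simp))
  have hRdecomp : R = L2 * L2' + C c * Q := by linear_combination hR'
  exact ⟨fun y hy hQy => by simp [hRdecomp, hy, hQy], L2', c, hL2', hRdecomp⟩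

/-- Let `Q` be a quadratic form of rank at least `5` (symmetric matrix `MQ`) over an
algebraically closed field of characteristic zero, and suppose
`L·R + L̃·Q = L₂·R₂ + L̃₂·Q` with `L, L₂, L̃, L̃₂` linear and `R, R₂` quadratic.  If `L` and
`L₂` are not proportional, then `R` vanishes on the variety `L₂ = Q = 0`, and hence
`R = L₂·L₂' + c₂·Q` for some linear form `L₂'` and constant `c₂`. -/
theorem quadratic_in_ideal_of_vanishing (K : Type*) [Field K] [IsAlgClosed K] [CharZero K]
    (n : ℕ) (MQ : Matrix (Fin n) (Fin n) K) (hMQ : MQ.IsSymm) (hrank : 5 ≤ MQ.rank)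
    (Q : MvPolynomial (Fin n) K)
    (hQdef : Q = ∑ i, ∑ j, MvPolynomial.C (MQ i j) * MvPolynomial.X i * MvPolynomial.X j)
    (L L2 Lt Lt2 R R2 : MvPolynomial (Fin n) K)
    (hL : L.IsHomogeneous 1) (hL2 : L2.IsHomogeneous 1)
    (hLt : Lt.IsHomogeneous 1) (hLt2 : Lt2.IsHomogeneous 1)
    (hR : R.IsHomogeneous 2) (hR2 : R2.IsHomogeneous 2)
    (heq : L * R + Lt * Q = L2 * R2 + Lt2 * Q)
    (hprop : ¬ ∃ c : K, L = c • L2 ∨ L2 = c • L) :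
    (∀ y : Fin n → K, MvPolynomial.eval y L2 = 0 → MvPolynomial.eval y Q = 0 →
        MvPolynomial.eval y R = 0) ∧
    ∃ (L2' : MvPolynomial (Fin n) K) (c2 : K), L2'.IsHomogeneous 1 ∧
      R = L2 * L2' + MvPolynomial.C c2 * Q :=
  quadratic_in_ideal_of_vanishing_general K n MQ hMQ hrank Q hQdef L L2 Lt Lt2 R R2 hL hL2 hR heq
    hprop
end
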